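/- If α₁, α₂, α₃ are integers each at least 2 with 1/α₁ + 1/α₂ + 1/α₃ > 1, and β₁, β₂, β₃ are integers with 0 < βᵢ < αᵢ for each i, then β₁/α₁ + β₂/α₂ + β₃/α₃ is not an integer. -/
import Mathlib


/-- For a platonic triple `(α₁,α₂,α₃)` and `0 < βᵢ < αᵢ`, the sum
`β₁/α₁ + β₂/α₂ + β₃/α₃` is not an integer. -/
theorem sum_beta_div_alpha_not_integer (a b c β₁ β₂ β₃ : ℤ)
    (ha : 2 ≤ a) (hb : 2 ≤ b) (hc : 2 ≤ c)
    (h : 1 < (1 : ℚ) / a + 1 / b + 1 / c)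
    (h1 : 0 < β₁ ∧ β₁ < a) (h2 : 0 < β₂ ∧ β₂ < b) (h3 : 0 < β₃ ∧ β₃ < c) :
    ¬ ∃ k : ℤ, (β₁ : ℚ) / a + (β₂ : ℚ) / b + (β₃ : ℚ) / c = (k : ℚ) := by
  rintro ⟨k, hk⟩
  obtain ⟨hβ₁, hβ₁a⟩ := h1
  obtain ⟨hβ₂, hβ₂b⟩ := h2
  obtain ⟨hβ₃, hβ₃c⟩ := h3
  have haq : (2:ℚ) ≤ a := by exact_mod_cast ha
  have hbq : (2:ℚ) ≤ b := by exact_mod_cast hb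
  have hcq : (2:ℚ) ≤ c := by exact_mod_cast hc
  have ha0 : (0:ℚ) < a := by linarith
  have hb0 : (0:ℚ) < b := by linarith
  have hc0 : (0:ℚ) < c := by linarith
  have l1 : (1:ℚ) ≤ β₁ := by exact_mod_cast hβ₁
  have l2 : (1:ℚ) ≤ β₂ := by exact_mod_cast hβ₂
  have l3 : (1:ℚ) ≤ β₃ := by exact_mod_cast hβ₃
  have u1 : (β₁:ℚ) ≤ a - 1 := by
    have : β₁ ≤ a - 1 := by omega
    exact_mod_cast this
  have u2 : (β₂:ℚ) ≤ b - 1 := by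
    have : β₂ ≤ b - 1 := by omega
    exact_mod_cast this
  have u3 : (β₃:ℚ) ≤ c - 1 := by
    have : β₃ ≤ c - 1 := by omega
    exact_mod_cast this
  -- lower bound: sum ≥ 1/a + 1/b + 1/c > 1
  have low : (1:ℚ)/a + 1/b + 1/c ≤ (β₁ : ℚ) / a + (β₂ : ℚ) / b + (β₃ : ℚ) / c := by
    gcongr
  -- upper bound: sum ≤ 3 - (1/a + 1/b + 1/c) < 2
  have up : (β₁ : ℚ) / a + (β₂ : ℚ) / b + (β₃ : ℚ) / c ≤ (1 - 1/a) + (1 - 1/b) + (1 - 1/c) := by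
    have e1 : ((a:ℚ) - 1)/a = 1 - 1/a := by field_simp
    have e2 : ((b:ℚ) - 1)/b = 1 - 1/b := by field_simp
    have e3 : ((c:ℚ) - 1)/c = 1 - 1/c := by field_simp
    calc (β₁ : ℚ) / a + (β₂ : ℚ) / b + (β₃ : ℚ) / c
        ≤ ((a:ℚ)-1)/a + ((b:ℚ)-1)/b + ((c:ℚ)-1)/c := by gcongr
      _ = (1 - 1/a) + (1 - 1/b) + (1 - 1/c) := by rw [e1, e2, e3]
  have hk1 : (1:ℚ) < (k:ℚ) := by linarith
  have hk2 : (k:ℚ) < 2 := by linarith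
  have hk1' : (1:ℤ) < k := by exact_mod_cast hk1
  have hk2' : k < 2 := by exact_mod_cast hk2
  omega
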